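/- Let Λ, Σ be r×r real diagonal matrices with Λ = diag(μ_1 I_{m_1}, …, μ_l I_{m_l}), 1 ≤ μ_1 < … < μ_l, where for each k with the corresponding diagonal entry of Λ exceeding 1, that entry equals the corresponding diagonal entry of Σ (i.e. Λ_{kk} = max{1, Σ_{kk}} with Σ decreasing). If R ∈ U(r) and Σ ⪯ R Λ R*, then R is block-diagonal R = diag(R_1,…,R_l) with R_p ∈ U(m_p); consequently R Λ R* = Λ. -/

import Mathlib

noncomputable section

open Matrix Finset
open scoped ComplexOrder

abbrev Mat (p : ℕ) := Matrix (Fin p) (Fin p) ℂ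
abbrev Euc (n : ℕ) := EuclideanSpace ℂ (Fin n)

/-- The square root of a positive semidefinite matrix, as defined in Mathlib of December 2024
(removed since in favour of `CFC.sqrt`). -/
def Matrix.PosSemidef.sqrt {n : Type*} [Fintype n] [DecidableEq n] {A : Matrix n n ℂ}
    (hA : A.PosSemidef) : Matrix n n ℂ :=
  (hA.1.eigenvectorUnitary : Matrix n n ℂ) * diagonal ((↑) ∘ (√·) ∘ hA.1.eigenvalues) *
    (star hA.1.eigenvectorUnitary : Matrix n n ℂ)

theorem Matrix.PosSemidef.posSemidef_sqrt {n : Type*} [Fintype n] [DecidableEq n]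
    {A : Matrix n n ℂ} (hA : A.PosSemidef) : hA.sqrt.PosSemidef := by
  unfold Matrix.PosSemidef.sqrt
  exact (posSemidef_diagonal_iff.mpr (fun i => by
    simp only [Function.comp_apply, Complex.zero_le_real]; exact Real.sqrt_nonneg _)).mul_mul_conjTranspose_same _

/-- Loewner order: `X ⪯ Y`. -/
def loewner {p : ℕ} (X Y : Mat p) : Prop := (Y - X).PosSemidef

/-- Eigenvalues (unsorted) of `X^{-1/2} Y X^{-1/2}`, i.e. of the pencil `X⁻¹ Y`. -/
def relEigs {p : ℕ} {X Y : Mat p} (hX : X.PosDef) (hY : Y.IsHermitian) : Fin p → ℝ :=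
  Matrix.IsHermitian.eigenvalues (A := hX.posSemidef.sqrt⁻¹ * Y * hX.posSemidef.sqrt⁻¹) (by
    have hS : (hX.posSemidef.sqrt).IsHermitian := hX.posSemidef.posSemidef_sqrt.isHermitian
    have hSi : (hX.posSemidef.sqrt⁻¹).IsHermitian := hS.inv
    have h : hX.posSemidef.sqrt⁻¹ * Y * hX.posSemidef.sqrt⁻¹
        = hX.posSemidef.sqrt⁻¹ * Y * (hX.posSemidef.sqrt⁻¹)ᴴ := by rw [hSi.eq]
    rw [h]
    exact Matrix.isHermitian_mul_mul_conjTranspose _ hY)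

/-- Eigenvalues of a Hermitian matrix, sorted in decreasing order. -/
def eigsDesc {p : ℕ} {Z : Mat p} (hZ : Z.IsHermitian) : Fin p → ℝ :=
  fun i => (hZ.eigenvalues ∘ Tuple.sort hZ.eigenvalues) i.rev

/-- Decreasingly sorted eigenvalues of the pencil `X⁻¹ Y`. -/
def relEigsDesc {p : ℕ} {X Y : Mat p} (hX : X.PosDef) (hY : Y.IsHermitian) : Fin p → ℝ :=
  fun i => ((relEigs hX hY) ∘ Tuple.sort (relEigs hX hY)) i.rev

/-- Zero-padding of an `a × a` matrix to an `N × N` matrix. -/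
def padTo (N : ℕ) {a : ℕ} (A : Mat a) : Mat N :=
  Matrix.of fun i j => if h : (i : ℕ) < a ∧ (j : ℕ) < a then A ⟨i, h.1⟩ ⟨j, h.2⟩ else 0

/-- `diag(P, I)` where `P` is `c × c`. -/
def upPad {s : ℕ} (c : ℕ) (P : Mat c) : Mat s :=
  Matrix.of fun i j =>
    if hi : (i : ℕ) < c then (if hj : (j : ℕ) < c then P ⟨i, hi⟩ ⟨j, hj⟩ else 0)
    else if (i : ℕ) = (j : ℕ) then 1 else 0

/-- `diag(I_c, T)` where `T` is `(s-c) × (s-c)`. -/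
def lowPad {s : ℕ} (c : ℕ) (T : Mat (s - c)) : Mat s :=
  Matrix.of fun i j =>
    if hi : (i : ℕ) < c then (if (i : ℕ) = (j : ℕ) then 1 else 0)
    else if hj : (j : ℕ) < c then 0
    else T ⟨(i : ℕ) - c, by have := i.isLt; omega⟩ ⟨(j : ℕ) - c, by have := j.isLt; omega⟩

/-- The natural isometric inclusion `k^a → k^N` (for `a ≤ N`), as a linear map. -/
def incl (a N : ℕ) : Euc a →ₗ[ℂ] Euc N :=
  Matrix.toEuclideanLin (Matrix.of fun (i : Fin N) (j : Fin a) => if (i : ℕ) = (j : ℕ) then (1 : ℂ) else 0)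

/-- The orthogonal complement of the kernel of (the linear map of) a matrix. -/
def kerPerp {n : ℕ} (A : Mat n) : Submodule ℂ (Euc n) :=
  (LinearMap.ker (Matrix.toEuclideanLin A))ᗮ

/-- Matrix representation `(uᵢ* A uⱼ)` of `A` with respect to a tuple of vectors `u`. -/
def rep {n p : ℕ} (A : Mat n) (u : Fin p → Euc n) : Mat p :=
  Matrix.of fun i j => (inner ℂ (u i) (Matrix.toEuclideanLin A (u j)) : ℂ)

/-- `(u, v)` is a set of principal vectors between `U` and `V` with cosines of principal
angles `σ` (decreasing). -/
def IsPrincipalSystem {N p q : ℕ} (U V : Submodule ℂ (Euc N))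
    (u : Fin p → Euc N) (v : Fin q → Euc N) (σ : Fin (min p q) → ℝ) : Prop :=
  Orthonormal ℂ u ∧ Submodule.span ℂ (Set.range u) = U ∧
  Orthonormal ℂ v ∧ Submodule.span ℂ (Set.range v) = V ∧
  Antitone σ ∧ (∀ i, 0 ≤ σ i) ∧
  ∀ (i : Fin p) (j : Fin q), (inner ℂ (u i) (v j) : ℂ) =
    if h : (i : ℕ) = (j : ℕ) ∧ (i : ℕ) < min p q then ((σ ⟨(i : ℕ), h.2⟩ : ℝ) : ℂ) else 0

/-- Geodesic distance on Grassmannians: square root of the sum of squared principal angles. -/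
def dGr {N : ℕ} (U V : Submodule ℂ (Euc N)) : ℝ :=
  sInf {x | ∃ (u : Fin (Module.finrank ℂ U) → Euc N) (v : Fin (Module.finrank ℂ V) → Euc N)
    (σ : Fin (min (Module.finrank ℂ U) (Module.finrank ℂ V)) → ℝ),
    IsPrincipalSystem U V u v σ ∧ x = Real.sqrt (∑ i, Real.arccos (σ i) ^ 2)}

/-- Generalized Hausdorff value of a function on a subset of a product. -/
def hausd {α β : Type*} (δ : α → β → ℝ) (Z : Set (α × β)) : ℝ :=
  max (sSup {x | ∃ a ∈ Prod.fst '' Z, x = sInf {y | ∃ b, (a, b) ∈ Z ∧ y = δ a b}})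
      (sSup {x | ∃ b ∈ Prod.snd '' Z, x = sInf {y | ∃ a, (a, b) ∈ Z ∧ y = δ a b}})

/-- The set of pairs of matrix representations with respect to all principal vector systems. -/
def ZSet {N p q : ℕ} (A B : Mat N) : Set (Mat p × Mat q) :=
  {z | ∃ u v σ, IsPrincipalSystem (kerPerp A) (kerPerp B) u v σ ∧ z = (rep A u, rep B v)}

/-- The geometric distance `GD_{d,δ}` between PSD matrices of possibly different sizes. -/
def GD {n m p q : ℕ} (d : ∀ N, Submodule ℂ (Euc N) → Submodule ℂ (Euc N) → ℝ)
    (δ : Mat p → Mat q → ℝ) (A : Mat n) (B : Mat m) : ℝ :=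
  Real.sqrt (d (max n m) (kerPerp (padTo (max n m) A)) (kerPerp (padTo (max n m) B)) ^ 2 +
    hausd δ (ZSet (padTo (max n m) A) (padTo (max n m) B)) ^ 2)

end

open Matrix
open scoped ComplexOrder

/-- Key uniqueness step: if `Λ = diag(μ₁ I_{m₁},…,μ_l I_{m_l})` with `1 ≤ μ₁ ≤ … ≤ μ_l`
(entrywise `Λ_kk = max{1, Σ_kk}`), `R` is unitary and `Σ ⪯ R Λ Rᴴ`, then `R` is block
diagonal with blocks matching the multiplicities of the `μ`'s, and hence `R Λ Rᴴ = Λ`. -/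
theorem unitary_block_diagonal_of_loewner
    {r : ℕ} (lam sig : Fin r → ℝ)
    (hmono : Monotone lam)
    (hmax : ∀ k, lam k = max 1 (sig k))
    (R : Mat r) (hR : R ∈ Matrix.unitaryGroup (Fin r) ℂ)
    (hord : loewner (Matrix.diagonal fun k => ((sig k : ℝ) : ℂ))
      (R * Matrix.diagonal (fun k => ((lam k : ℝ) : ℂ)) * Rᴴ)) :
    (∀ i j, lam i ≠ lam j → R i j = 0) ∧
    R * Matrix.diagonal (fun k => ((lam k : ℝ) : ℂ)) * Rᴴ =
      Matrix.diagonal (fun k => ((lam k : ℝ) : ℂ)) := by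
  classical
  set D : Mat r := Matrix.diagonal (fun k => ((lam k : ℝ) : ℂ)) with hD
  have hR2 : R * Rᴴ = 1 := by
    simpa [star_eq_conjTranspose] using Matrix.mem_unitaryGroup_iff.mp hR
  have hR1 : Rᴴ * R = 1 := by
    simpa [star_eq_conjTranspose] using Matrix.mem_unitaryGroup_iff'.mp hR
  have hlam1 : ∀ k, (1 : ℝ) ≤ lam k := fun k => (hmax k).symm ▸ le_max_left _ _
  -- row norms
  have hrow : ∀ k, ∑ m, Complex.normSq (R k m) = 1 := by
    intro k
    have h := congrFun (congrFun hR2 k) k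
    rw [Matrix.mul_apply] at h
    simp only [Matrix.conjTranspose_apply, Matrix.one_apply_eq] at h
    have h2 : ((∑ m, Complex.normSq (R k m) : ℝ) : ℂ) = 1 := by
      push_cast
      rw [← h]
      exact Finset.sum_congr rfl fun m _ => by rw [← Complex.mul_conj]; rfl
    exact_mod_cast h2
  -- column norms
  have hcol : ∀ j, ∑ i, Complex.normSq (R i j) = 1 := by
    intro j
    have h := congrFun (congrFun hR1 j) j
    rw [Matrix.mul_apply] at h
    simp only [Matrix.conjTranspose_apply, Matrix.one_apply_eq] at h
    have h2 : ((∑ i, Complex.normSq (R i j) : ℝ) : ℂ) = 1 := by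
      push_cast
      rw [← h]
      exact Finset.sum_congr rfl fun i _ => by
        rw [Complex.normSq_eq_conj_mul_self]; rfl
    exact_mod_cast h2
  -- diagonal entries of X = R D Rᴴ
  have hXdiag : ∀ k, (R * D * Rᴴ) k k =
      ((∑ m, lam m * Complex.normSq (R k m) : ℝ) : ℂ) := by
    intro k
    have hterm : ∀ m, (R * D) k m * (Rᴴ) m k =
        ((lam m * Complex.normSq (R k m) : ℝ) : ℂ) := by
      intro m
      rw [hD, Matrix.mul_diagonal, show (Rᴴ) m k = (starRingEnd ℂ) (R k m) from rfl,
        Complex.ofReal_mul, ← Complex.mul_conj]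
      ring
    rw [Matrix.mul_apply]
    simp_rw [hterm]
    norm_cast
  -- the Loewner inequality on diagonal entries
  have hineq : ∀ k, sig k ≤ ∑ m, lam m * Complex.normSq (R k m) := by
    intro k
    have hps : (R * D * Rᴴ - Matrix.diagonal fun k => ((sig k : ℝ) : ℂ)).PosSemidef := hord
    have h0 : 0 ≤ (R * D * Rᴴ - Matrix.diagonal fun k => ((sig k : ℝ) : ℂ)) k k := by
      exact hps.diag_nonneg
    rw [Matrix.sub_apply, hXdiag k, Matrix.diagonal_apply_eq, ← Complex.ofReal_sub] at h0
    have := Complex.zero_le_real.mp h0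
    linarith
  -- main induction: rows vanish off their eigenvalue class
  have main : ∀ n : ℕ, ∀ k : Fin r,
      (Finset.univ.filter fun j => lam k < lam j).card ≤ n →
      ∀ j, lam j ≠ lam k → R k j = 0 := by
    intro n
    induction n using Nat.strong_induction_on with
    | _ n IH =>
      intro k hk j hj
      set T : Finset (Fin r) := Finset.univ.filter fun j => lam k < lam j with hT
      -- rows indexed by T are supported in T (by induction)
      have hTrow : ∀ i ∈ T, ∀ j' ∉ T, R i j' = 0 := by
        intro i hi j' hj'
        have hik : lam k < lam i := (by rw [hT, Finset.mem_filter] at hi; exact hi.2)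
        have hj'k : lam j' ≤ lam k := le_of_not_gt fun h => hj'
          (by rw [hT, Finset.mem_filter]; exact ⟨Finset.mem_univ _, h⟩)
        have hsub : (Finset.univ.filter fun j => lam i < lam j) ⊂ T := by
          refine Finset.ssubset_iff_of_subset ?_ |>.mpr ⟨i, hi, by simp⟩
          intro x hx
          rw [Finset.mem_filter] at hx ⊢
          exact ⟨Finset.mem_univ _, lt_trans hik hx.2⟩
        have hcard : (Finset.univ.filter fun j => lam i < lam j).card < n :=
          lt_of_lt_of_le (Finset.card_lt_card hsub) hk
        exact IH _ hcard i le_rfl j' (by intro h; rw [h] at hj'k; linarith)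
      -- rows in T have full norm within columns T
      have hrowT : ∀ i ∈ T, ∑ j' ∈ T, Complex.normSq (R i j') = 1 := by
        intro i hi
        rw [← hrow i]
        refine Finset.sum_subset (Finset.subset_univ T) fun x _ hx => ?_
        rw [hTrow i hi x hx, Complex.normSq_zero]
      -- counting: rows outside T vanish on columns T
      have key : ∑ i ∈ Tᶜ, ∑ j' ∈ T, Complex.normSq (R i j') = 0 := by
        have h1 : ∑ i, ∑ j' ∈ T, Complex.normSq (R i j') = T.card := by
          rw [Finset.sum_comm]
          rw [Finset.sum_congr rfl fun j' (hj' : j' ∈ T) => hcol j']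
          simp
        have h2 : ∑ i ∈ T, ∑ j' ∈ T, Complex.normSq (R i j') = T.card := by
          rw [Finset.sum_congr rfl hrowT]
          simp
        have h3 := Finset.sum_add_sum_compl T (fun i => ∑ j' ∈ T, Complex.normSq (R i j'))
        rw [h1, h2] at h3
        linarith
      have hkT : k ∈ Tᶜ := by
        rw [Finset.mem_compl, hT, Finset.mem_filter]
        exact fun h => lt_irrefl _ h.2
      have hzero : ∀ j', lam k < lam j' → R k j' = 0 := by
        intro j' hj'
        have hrk : ∑ j'' ∈ T, Complex.normSq (R k j'') = 0 :=
          (Finset.sum_eq_zero_iff_of_nonneg fun i _ =>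
            Finset.sum_nonneg fun _ _ => Complex.normSq_nonneg _).mp key k hkT
        have : Complex.normSq (R k j') = 0 :=
          (Finset.sum_eq_zero_iff_of_nonneg fun _ _ => Complex.normSq_nonneg _).mp hrk j'
            (by rw [hT, Finset.mem_filter]; exact ⟨Finset.mem_univ _, hj'⟩)
        exact Complex.normSq_eq_zero.mp this
      rcases lt_or_gt_of_ne hj with hlt | hgt
      · -- lam j < lam k, so lam k > 1 and sig k = lam k
        have h1k : 1 < lam k := lt_of_le_of_lt (hlam1 j) hlt
        have hsig : sig k = lam k := by
          rcases le_or_gt (sig k) 1 with h | h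
          · rw [hmax k, max_eq_left h] at h1k; linarith
          · rw [hmax k, max_eq_right h.le]
        have hsum : ∑ m, (lam k - lam m) * Complex.normSq (R k m) ≤ 0 := by
          have he : ∑ m, (lam k - lam m) * Complex.normSq (R k m) =
              lam k * (∑ m, Complex.normSq (R k m)) -
                ∑ m, lam m * Complex.normSq (R k m) := by
            rw [Finset.mul_sum, ← Finset.sum_sub_distrib]
            exact Finset.sum_congr rfl fun m _ => by ring
          rw [he, hrow k]
          have := hineq k
          rw [hsig] at this
          linarith
        have hterms : ∀ m ∈ (Finset.univ : Finset (Fin r)),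
            0 ≤ (lam k - lam m) * Complex.normSq (R k m) := by
          intro m _
          rcases le_or_gt (lam m) (lam k) with h | h
          · exact mul_nonneg (by linarith) (Complex.normSq_nonneg _)
          · rw [hzero m h, Complex.normSq_zero, mul_zero]
        have hall := (Finset.sum_eq_zero_iff_of_nonneg hterms).mp
          (le_antisymm hsum (Finset.sum_nonneg hterms)) j (Finset.mem_univ j)
        rcases mul_eq_zero.mp hall with h | h
        · exfalso; linarith [sub_pos.mpr hlt, h]
        · exact Complex.normSq_eq_zero.mp h
      · exact hzero j hgt
  have hmain : ∀ i j, lam i ≠ lam j → R i j = 0 :=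
    fun i j h => main _ i le_rfl j (Ne.symm h)
  refine ⟨hmain, ?_⟩
  ext i j
  rw [Matrix.mul_apply]
  have hterm : ∀ m, (R * D) i m * (Rᴴ) m j =
      ((lam i : ℝ) : ℂ) * (R i m * (starRingEnd ℂ) (R j m)) := by
    intro m
    rw [hD, Matrix.mul_diagonal, show (Rᴴ) m j = (starRingEnd ℂ) (R j m) from rfl]
    by_cases hm : lam m = lam i
    · rw [hm]; ring
    · rw [hmain i m (Ne.symm hm)]; ring
  simp_rw [hterm]
  rw [← Finset.mul_sum]
  have hRR : ∑ m, R i m * (starRingEnd ℂ) (R j m) = (1 : Mat r) i j := by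
    rw [← hR2, Matrix.mul_apply]
    rfl
  rw [hRR]
  by_cases hij : i = j
  · subst hij
    rw [Matrix.one_apply_eq, mul_one, hD, Matrix.diagonal_apply_eq]
  · rw [Matrix.one_apply_ne hij, mul_zero, hD, Matrix.diagonal_apply_ne _ hij]
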